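/- For every integer n ≥ 2 and every real z, the monic polynomials H_n(z) := G_n(z)/p_n^(n) satisfy the three-term recurrence H_n(z) = (z + β_n)·H_{n−1}(z) − γ_n·H_{n−2}(z), where β_n = n(n−1) and γ_n = n(n−1)²(n−2)/4, with initial data H_0(z) = 1 and H_1(z) = z. -/
import Mathlib


open Finset

/-- `p n k` is the probability `p_k^{(n)} = P(f_0(T_n) = k)` that the random convex chain
`T_n` has exactly `k` vertices (besides the two corners), given by Buchta's formula:
`p_k^{(n)} = 2^k · Σ_{i_1+⋯+i_k = n, i_j ≥ 1} Π_{j=1}^{k} i_j / (s_j (s_j + 1))`,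
where `s_j = i_1 + ⋯ + i_j`.  In particular `p 0 0 = 1` and `p n 0 = 0` for `n ≥ 1`,
and `p n k = 0` for `k > n`. -/
noncomputable def p (n k : ℕ) : ℝ :=
  2 ^ k *
    ∑ i ∈ (Fintype.piFinset fun _ : Fin k => Finset.Icc 1 n).filter
        (fun i => ∑ j, i j = n),
      ∏ j : Fin k,
        (i j : ℝ) /
          (((∑ l ∈ Finset.univ.filter (fun l => l ≤ j), i l : ℕ) : ℝ) *
            (((∑ l ∈ Finset.univ.filter (fun l => l ≤ j), i l : ℕ) : ℝ) + 1))


noncomputable def W (k : ℕ) (i : Fin k → ℕ) : ℝ :=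
  ∏ j : Fin k,
    (i j : ℝ) /
      (((∑ l ∈ Finset.univ.filter (fun l => l ≤ j), i l : ℕ) : ℝ) *
        (((∑ l ∈ Finset.univ.filter (fun l => l ≤ j), i l : ℕ) : ℝ) + 1))

def B (n k : ℕ) : Finset (Fin k → ℕ) :=
  (Fintype.piFinset fun _ : Fin k => Finset.Icc 1 n).filter (fun i => ∑ j, i j = n)

lemma mem_B {n k : ℕ} {i : Fin k → ℕ} :
    i ∈ B n k ↔ (∀ j, 1 ≤ i j) ∧ ∑ j, i j = n := by
  simp only [B, Finset.mem_filter, Fintype.mem_piFinset, Finset.mem_Icc]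
  constructor
  · rintro ⟨h1, h2⟩; exact ⟨fun j => (h1 j).1, h2⟩
  · rintro ⟨h1, h2⟩
    refine ⟨fun j => ⟨h1 j, ?_⟩, h2⟩
    calc i j ≤ ∑ l, i l := Finset.single_le_sum (fun l _ => Nat.zero_le _) (Finset.mem_univ j)
      _ = n := h2

lemma psum_castSucc (k : ℕ) (i : Fin (k+1) → ℕ) (j : Fin k) :
    ∑ l ∈ Finset.univ.filter (fun l => l ≤ j.castSucc), i l
      = ∑ l ∈ Finset.univ.filter (fun l => l ≤ j), i l.castSucc := by
  refine Finset.sum_nbij' (fun l => if h : (l : ℕ) < k then (⟨l, h⟩ : Fin k) else j)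
    (fun l => l.castSucc) ?_ ?_ ?_ ?_ ?_
  · intro a ha
    simp only [Finset.mem_filter, Finset.mem_univ, true_and] at ha ⊢
    have hlt : (a : ℕ) < k := lt_of_le_of_lt (by exact_mod_cast ha) j.isLt
    rw [dif_pos hlt]
    exact ha
  · intro a ha
    simp only [Finset.mem_filter, Finset.mem_univ, true_and] at ha ⊢
    simpa using ha
  · intro a ha
    simp only [Finset.mem_filter, Finset.mem_univ, true_and] at ha
    have hlt : (a : ℕ) < k := lt_of_le_of_lt (by exact_mod_cast ha) j.isLt
    simp only [dif_pos hlt]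
    apply Fin.ext
    simp
  · intro a ha
    have hlt : ((a.castSucc : Fin (k+1)) : ℕ) < k := a.isLt
    simp only [dif_pos hlt]
    apply Fin.ext
    simp
  · intro a ha
    simp only [Finset.mem_filter, Finset.mem_univ, true_and] at ha
    have hlt : (a : ℕ) < k := lt_of_le_of_lt (by exact_mod_cast ha) j.isLt
    simp only [dif_pos hlt]
    congr 1

lemma psum_last (k n : ℕ) (i : Fin (k+1) → ℕ) (h : ∑ j, i j = n) :
    ∑ l ∈ Finset.univ.filter (fun l => l ≤ Fin.last k), i l = n := by
  rw [Finset.filter_true_of_mem (fun l _ => Fin.le_last l)]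
  exact h

lemma W_succ (k n : ℕ) (i : Fin (k+1) → ℕ) (h : ∑ j, i j = n) :
    W (k+1) i = W k (fun l => i l.castSucc) * ((i (Fin.last k) : ℝ) / ((n : ℝ) * ((n : ℝ) + 1))) := by
  rw [W, Fin.prod_univ_castSucc]
  congr 1
  · rw [W]
    refine Finset.prod_congr rfl fun j _ => ?_
    rw [psum_castSucc]
  · rw [psum_last k n i h]

lemma sum_B_succ (n k : ℕ) :
    ∑ i ∈ B n (k+1), W (k+1) i
      = ∑ m ∈ Finset.range n, ∑ i ∈ B m k,
          (W k i * (((n - m : ℕ) : ℝ) / ((n : ℝ) * ((n : ℝ) + 1)))) := by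
  rw [Finset.sum_sigma']
  refine Finset.sum_nbij' (fun i => ⟨∑ j, i (Fin.castSucc j), fun l => i l.castSucc⟩)
    (fun q => Fin.snoc q.2 (n - q.1)) ?_ ?_ ?_ ?_ ?_
  · intro a ha
    rw [mem_B] at ha
    obtain ⟨h1, h2⟩ := ha
    have hsum : ∑ j, a (Fin.castSucc j) + a (Fin.last k) = n := by
      rw [← h2, Fin.sum_univ_castSucc]
    have hlast : 1 ≤ a (Fin.last k) := h1 _
    simp only [Finset.mem_sigma, Finset.mem_range]
    refine ⟨by omega, ?_⟩
    rw [mem_B]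
    exact ⟨fun j => h1 _, rfl⟩
  · intro q hq
    simp only [Finset.mem_sigma, Finset.mem_range] at hq
    obtain ⟨hm, hb⟩ := hq
    rw [mem_B] at hb ⊢
    obtain ⟨h1, h2⟩ := hb
    have hsum : ∑ j, (Fin.snoc q.2 (n - q.1) : Fin (k+1) → ℕ) j = n := by
      rw [Fin.sum_univ_castSucc]
      simp only [Fin.snoc_castSucc, Fin.snoc_last]
      omega
    constructor
    · intro j
      induction j using Fin.lastCases with
      | last => simp only [Fin.snoc_last]; omega
      | cast j => simp only [Fin.snoc_castSucc]; exact h1 j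
    · exact hsum
  · intro a ha
    rw [mem_B] at ha
    obtain ⟨h1, h2⟩ := ha
    have hsum : ∑ j, a (Fin.castSucc j) + a (Fin.last k) = n := by
      rw [← h2, Fin.sum_univ_castSucc]
    funext j
    induction j using Fin.lastCases with
    | last => simp only [Fin.snoc_last]; omega
    | cast j => simp only [Fin.snoc_castSucc]
  · intro q hq
    simp only [Finset.mem_sigma, Finset.mem_range] at hq
    obtain ⟨hm, hb⟩ := hq
    rw [mem_B] at hb
    obtain ⟨h1, h2⟩ := hb
    have e1 : ∑ j, (Fin.snoc q.2 (n - q.1) : Fin (k+1) → ℕ) (Fin.castSucc j) = q.1 := by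
      simp only [Fin.snoc_castSucc]
      exact h2
    refine Sigma.ext ?_ ?_
    · exact e1
    · refine heq_of_eq_of_heq ?_ (heq_of_eq rfl)
      funext j
      simp only [Fin.snoc_castSucc]
  · intro a ha
    rw [mem_B] at ha
    obtain ⟨h1, h2⟩ := ha
    have hsum : ∑ j, a (Fin.castSucc j) + a (Fin.last k) = n := by
      rw [← h2, Fin.sum_univ_castSucc]
    have hlast : a (Fin.last k) = n - ∑ j, a (Fin.castSucc j) := by omega
    rw [W_succ k n a h2, hlast]

lemma p_eq (n k : ℕ) : p n k = 2 ^ k * ∑ i ∈ B n k, W k i := rfl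

lemma p_zero {n : ℕ} (hn : 1 ≤ n) : p n 0 = 0 := by
  rw [p_eq]
  have : B n 0 = ∅ := by
    rw [Finset.eq_empty_iff_forall_notMem]
    intro i hi
    rw [mem_B] at hi
    simp at hi
    omega
  simp [this]

lemma p00 : p 0 0 = 1 := by
  rw [p_eq]
  have : B 0 0 = {(fun j => 0 : Fin 0 → ℕ)} := by
    apply Finset.ext
    intro i
    simp only [mem_B, Finset.mem_singleton]
    constructor
    · intro _; funext j; exact j.elim0
    · intro h; subst h; simp
  simp [this, W]


lemma p_eq_zero_of_lt {n k : ℕ} (h : n < k) : p n k = 0 := by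
  rw [p_eq]
  have : B n k = ∅ := by
    rw [Finset.eq_empty_iff_forall_notMem]
    intro i hi
    rw [mem_B] at hi
    obtain ⟨h1, h2⟩ := hi
    have hk : ∑ _j : Fin k, 1 ≤ ∑ j, i j := Finset.sum_le_sum fun j _ => h1 j
    simp only [Finset.sum_const, Finset.card_univ, Fintype.card_fin, smul_eq_mul, mul_one] at hk
    omega
  simp [this]

lemma pRec (n k : ℕ) :
    p n (k+1) = ∑ m ∈ Finset.range n,
      2 * ((n : ℝ) - (m : ℝ)) / ((n : ℝ) * ((n : ℝ) + 1)) * p m k := by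
  rw [p_eq, sum_B_succ, Finset.mul_sum]
  refine Finset.sum_congr rfl fun m hm => ?_
  rw [Finset.mem_range] at hm
  rw [p_eq, Nat.cast_sub hm.le, ← Finset.sum_mul]
  ring


/-- `G n z = Σ_{k=1}^n p_k^{(n)} z^k` is the probability generating function of the
vertex number `f_0(T_n)`; by convention `G 0 z = 1` (note `p 0 0 = 1` and `p n 0 = 0`
for `n ≥ 1`, so the `k = 0` term is harmless). -/
noncomputable def G (n : ℕ) (z : ℝ) : ℝ :=
  ∑ k ∈ Finset.range (n + 1), p n k * z ^ k

lemma G_trunc (m N : ℕ) (h : m < N) (z : ℝ) :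
    ∑ k ∈ Finset.range N, p m k * z ^ k = G m z := by
  rw [G]
  symm
  apply Finset.sum_subset
  · intro x hx
    rw [Finset.mem_range] at hx ⊢
    omega
  · intro x _ hx
    rw [Finset.mem_range] at hx
    rw [p_eq_zero_of_lt (by omega), zero_mul]

lemma G_rec (n : ℕ) (hn : 1 ≤ n) (z : ℝ) :
    (n : ℝ) * ((n : ℝ) + 1) * G n z
      = 2 * z * ∑ m ∈ Finset.range n, ((n : ℝ) - (m : ℝ)) * G m z := by
  have h1 : G n z = ∑ k ∈ Finset.range n, p n (k+1) * z ^ (k+1) := by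
    rw [G, Finset.sum_range_succ']
    rw [p_zero hn]
    simp
  have h2 : G n z = ∑ m ∈ Finset.range n,
      2 * ((n : ℝ) - (m : ℝ)) / ((n : ℝ) * ((n : ℝ) + 1)) * (z * G m z) := by
    rw [h1]
    calc ∑ k ∈ Finset.range n, p n (k+1) * z ^ (k+1)
        = ∑ k ∈ Finset.range n, ∑ m ∈ Finset.range n,
            2 * ((n : ℝ) - (m : ℝ)) / ((n : ℝ) * ((n : ℝ) + 1)) * p m k * z ^ (k+1) := by
          refine Finset.sum_congr rfl fun k _ => ?_
          rw [pRec, Finset.sum_mul]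
      _ = ∑ m ∈ Finset.range n, ∑ k ∈ Finset.range n,
            2 * ((n : ℝ) - (m : ℝ)) / ((n : ℝ) * ((n : ℝ) + 1)) * p m k * z ^ (k+1) :=
          Finset.sum_comm
      _ = ∑ m ∈ Finset.range n,
            2 * ((n : ℝ) - (m : ℝ)) / ((n : ℝ) * ((n : ℝ) + 1)) * (z * G m z) := by
          refine Finset.sum_congr rfl fun m hm => ?_
          rw [Finset.mem_range] at hm
          rw [← G_trunc m n hm z, Finset.mul_sum, Finset.mul_sum]
          refine Finset.sum_congr rfl fun k _ => ?_
          ring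
  rw [h2, Finset.mul_sum, Finset.mul_sum]
  have hne : (n : ℝ) * ((n : ℝ) + 1) ≠ 0 := by
    have : (0:ℝ) < n := by exact_mod_cast hn
    positivity
  refine Finset.sum_congr rfl fun m _ => ?_
  field_simp

lemma pnn_succ (n : ℕ) :
    p (n+1) (n+1) = 2 / (((n:ℝ)+1) * ((n:ℝ)+2)) * p n n := by
  rw [pRec]
  rw [Finset.sum_eq_single n]
  · push_cast
    ring_nf
  · intro m hm hne
    rw [Finset.mem_range] at hm
    rw [p_eq_zero_of_lt (by omega)]
    ring
  · intro h
    exact absurd (Finset.self_mem_range_succ n) h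

lemma pnn_pos (n : ℕ) : 0 < p n n := by
  induction n with
  | zero => rw [p00]; norm_num
  | succ n ih =>
    rw [pnn_succ]
    have : (0:ℝ) < ((n:ℝ)+1) * ((n:ℝ)+2) := by positivity
    positivity

/-- `H n z = G n z / p_n^{(n)}` is the monic normalization of `G_n` (note `H 0 z = 1`
since `p 0 0 = 1`, and `H 1 z = z`). -/
noncomputable def H (n : ℕ) (z : ℝ) : ℝ := G n z / p n n

lemma H0 (z : ℝ) : H 0 z = 1 := by
  rw [H, G]
  simp [p00]

lemma p11 : p 1 1 = 1 := by
  have := pnn_succ 0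
  rw [p00] at this
  norm_num at this
  exact this

lemma H1 (z : ℝ) : H 1 z = z := by
  rw [H, G]
  rw [Finset.sum_range_succ, Finset.sum_range_one]
  rw [p_zero le_rfl, p11]
  simp

lemma base_rec (m : ℕ) (z : ℝ) :
    (m : ℝ) * ((m : ℝ) + 1) * G m z
      = 2 * z * ∑ j ∈ Finset.range m, ((m : ℝ) - (j : ℝ)) * G j z := by
  rcases Nat.eq_zero_or_pos m with h | h
  · subst h; simp
  · exact G_rec m h z

lemma key_sum (N : ℕ) (z : ℝ) :
    ∑ j ∈ Finset.range (N+2), (((N:ℝ)+2) - (j:ℝ)) * G j z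
      - 2 * ∑ j ∈ Finset.range (N+1), (((N:ℝ)+1) - (j:ℝ)) * G j z
      + ∑ j ∈ Finset.range N, ((N:ℝ) - (j:ℝ)) * G j z
      = G (N+1) z := by
  rw [Finset.sum_range_succ, Finset.sum_range_succ, Finset.sum_range_succ]
  have hz : ∑ j ∈ Finset.range N, (((N:ℝ)+2) - (j:ℝ)) * G j z
      = ∑ j ∈ Finset.range N,
          (2 * ((((N:ℝ)+1) - (j:ℝ)) * G j z) - ((N:ℝ) - (j:ℝ)) * G j z) :=
    Finset.sum_congr rfl fun j _ => by ring
  rw [Finset.sum_sub_distrib, ← Finset.mul_sum] at hz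
  push_cast
  linarith [hz]


/-- Theorem 3: the monic polynomials `H_n(z) = G_n(z)/p_n^{(n)}` satisfy the three-term
recurrence `H_n(z) = (z + β_n) H_{n−1}(z) − γ_n H_{n−2}(z)` for `n ≥ 2`, with
`β_n = n(n−1)`, `γ_n = n(n−1)²(n−2)/4`, and initial data `H_0(z) = 1`, `H_1(z) = z`. -/
theorem H_three_term_recurrence (n : ℕ) (hn : 2 ≤ n) (z : ℝ) :
    H n z =
        (z + (n : ℝ) * ((n : ℝ) - 1)) * H (n - 1) z -
          (n : ℝ) * ((n : ℝ) - 1) ^ 2 * ((n : ℝ) - 2) / 4 * H (n - 2) z ∧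
      H 0 z = 1 ∧ H 1 z = z := by
  refine ⟨?_, H0 z, H1 z⟩
  obtain ⟨N, rfl⟩ : ∃ N, n = N + 2 := ⟨n - 2, by omega⟩
  have e1 : N + 2 - 1 = N + 1 := by omega
  have e2 : N + 2 - 2 = N := by omega
  rw [e1, e2]
  have hG : ((N:ℝ)+2) * ((N:ℝ)+3) * G (N+2) z
      - 2 * (((N:ℝ)+1) * ((N:ℝ)+2)) * G (N+1) z
      + (N:ℝ) * ((N:ℝ)+1) * G N z = 2 * z * G (N+1) z := by
    have b2 := base_rec (N+2) z
    have b1 := base_rec (N+1) z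
    have b0 := base_rec N z
    have k := key_sum N z
    push_cast at b2 b1 b0
    linear_combination b2 - 2 * b1 + b0 + 2 * z * k
  have r1 : p (N+2) (N+2) = 2 / (((N:ℝ)+2) * ((N:ℝ)+3)) * p (N+1) (N+1) := by
    have := pnn_succ (N+1)
    push_cast at this ⊢
    convert this using 3 <;> ring
  have r2 : p (N+1) (N+1) = 2 / (((N:ℝ)+1) * ((N:ℝ)+2)) * p N N := by
    have := pnn_succ N
    push_cast at this ⊢
    exact this
  have hq : p N N ≠ 0 := ne_of_gt (pnn_pos N)
  have h1 : ((N:ℝ)+1) ≠ 0 := by positivity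
  have h2 : ((N:ℝ)+2) ≠ 0 := by positivity
  have h3 : ((N:ℝ)+3) ≠ 0 := by positivity
  have h23 : ((N:ℝ)+2) * ((N:ℝ)+3) ≠ 0 := mul_ne_zero h2 h3
  have hG2 : G (N+2) z = (2 * z * G (N+1) z + 2 * (((N:ℝ)+1) * ((N:ℝ)+2)) * G (N+1) z
      - (N:ℝ) * ((N:ℝ)+1) * G N z) / (((N:ℝ)+2) * ((N:ℝ)+3)) := by
    rw [eq_div_iff h23]
    linear_combination hG
  rw [H, H, H, r1, r2, hG2]
  push_cast
  field_simp
  ring
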